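/- arXiv:1510.05038 — 8 statements merged into one kernel-verified Lean document; each statement's English description precedes it below -/
import Mathlib

section
/- For all n ≥ 0 and l with l ≢ n (mod 2), the alternating convolution of unsigned Stirling numbers of the first kind vanishes: ∑_{k=0}^{n} C(n,k) ∑_{i+j=l} (-1)^{k+1-j} c(n-k+1,i) c(k+1,j) = 0. -/
open Finset Polynomial

/-- Number of cycles (including fixed points) of a permutation of a finite type. -/
def cycleCount {α : Type*} [Fintype α] [DecidableEq α] (σ : Equiv.Perm α) : ℕ :=
  Multiset.card σ.cycleType + (Fintype.card α - σ.cycleType.sum)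

/-- Unsigned Stirling number of the first kind: the number of permutations of an
`m`-element set with exactly `i` cycles. -/
noncomputable def stirC (m i : ℕ) : ℕ :=
  Nat.card {σ : Equiv.Perm (Fin m) // cycleCount σ = i}

/-- `O(m, g)`: the number of permutations of an `m`-element set all of whose cycles
are odd and which have exactly `m - 2g` cycles. -/
noncomputable def oddCyclePermCount (m : ℕ) (g : ℤ) : ℕ :=
  Nat.card {σ : Equiv.Perm (Fin m) //
    (∀ l ∈ σ.cycleType, Odd l) ∧ (cycleCount σ : ℤ) = (m : ℤ) - 2 * g}
/-! Reflecting `k ↦ n - k` and swapping `(i, j) ↦ (j, i)` maps each summand to its negative: the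
binomial coefficient and the product of Stirling numbers are unchanged, while the two sign exponents
add up to `n + 2 - l`, which is odd. Hence the sum equals its own negative. -/

theorem neg_one_zpow_eq_neg_of_odd_add {K : Type*} [DivisionRing K] {a b : ℤ} (h : Odd (a + b)) :
    (-1 : K) ^ a = -(-1 : K) ^ b := by
  have hodd : Odd (a - b) := by
    rw [Int.odd_iff] at h ⊢
    omega
  calc (-1 : K) ^ a = (-1 : K) ^ b * (-1 : K) ^ (a - b) := by
        rw [← zpow_add₀ (neg_ne_zero.mpr one_ne_zero), add_sub_cancel]
    _ = -(-1 : K) ^ b := by rw [hodd.neg_one_zpow, mul_neg_one]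

theorem Finset.sum_range_succ_eq_zero_of_reflect_eq_neg {G : Type*} [AddCommGroup G]
    [IsAddTorsionFree G] {f : ℕ → G} {n : ℕ} (hf : ∀ k ≤ n, f (n - k) = -f k) :
    ∑ k ∈ range (n + 1), f k = 0 := by
  refine self_eq_neg.mp ?_
  calc ∑ k ∈ range (n + 1), f k = ∑ k ∈ range (n + 1), f (n - k) :=
        (sum_range_reflect f (n + 1)).symm
    _ = -∑ k ∈ range (n + 1), f k := by
        rw [← sum_neg_distrib]
        exact sum_congr rfl fun k hk => hf k (Nat.lt_succ_iff.mp (mem_range.mp hk))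

theorem signed_convolution_swap_eq_neg {K : Type*} [Field K] (c : ℕ → ℕ → K) {l k m : ℕ}
    (hpar : l % 2 ≠ (k + m) % 2) :
    ∑ p ∈ antidiagonal l, (-1 : K) ^ ((m : ℤ) + 1 - (p.2 : ℤ)) * c (k + 1) p.1 * c (m + 1) p.2 =
      -∑ p ∈ antidiagonal l, (-1 : K) ^ ((k : ℤ) + 1 - (p.2 : ℤ)) * c (m + 1) p.1 * c (k + 1) p.2 := by
  rw [← sum_neg_distrib, ← Nat.sum_antidiagonal_swap]
  refine sum_congr rfl fun p hp => ?_
  rw [HasAntidiagonal.mem_antidiagonal] at hp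
  have hodd : Odd (((m : ℤ) + 1 - (p.1 : ℤ)) + ((k : ℤ) + 1 - (p.2 : ℤ))) := by
    rw [Int.odd_iff]
    omega
  rw [Prod.fst_swap, Prod.snd_swap, neg_one_zpow_eq_neg_of_odd_add hodd]
  ring

/-- For `l` of parity different from `n`, the alternating convolution of unsigned
Stirling numbers of the first kind vanishes. -/
theorem stmt0 (n l : ℕ) (hpar : l % 2 ≠ n % 2) :
    ∑ k ∈ Finset.range (n + 1), (n.choose k : ℚ) *
      ∑ p ∈ Finset.HasAntidiagonal.antidiagonal l,
        (-1 : ℚ) ^ ((k : ℤ) + 1 - (p.2 : ℤ)) *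
          (stirC (n - k + 1) p.1 : ℚ) * (stirC (k + 1) p.2 : ℚ) = 0 :=
  sum_range_succ_eq_zero_of_reflect_eq_neg fun k hk => by
    rw [Nat.choose_symm hk, Nat.sub_sub_self hk, signed_convolution_swap_eq_neg
      (fun m i => (stirC m i : ℚ)) (by omega), mul_neg]
end

section
/- The numbers O(n,g) of permutations of [n] with exactly n-2g odd cycles satisfy O(n+1,g) = O(n,g) + ∑_{k=1}^{g} (n)_{2k} · O(n-2k, g-k), where (n)_{2k} = n(n-1)⋯(n-2k+1) is the falling factorial. -/
open Finset Polynomial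

/-!
Classify `σ` by the cycle `c` through a fixed point `z`. If `c` has length `2k + 1` (with `k = 0`
when `σ z = z`), then `σ = c * δ` for a unique permutation `δ` of the `n - 2k` points off `c`; all
cycles of `σ` are odd iff those of `δ` are, and `δ` has one cycle less than `σ`, so the number of
such `σ` is `O(n - 2k, g - k)`. The cycle `c` is determined by the sequence of distinct points
`σ z, …, σ^(2k) z` avoiding `z`, so there are `(n)_{2k}` choices of `c`.
-/
open Equiv Equiv.Perm

namespace Equiv.Perm

section CycleOf

variable {α : Type*} [Fintype α] [DecidableEq α]

lemma cycleType_permCongr {β : Type*} [Fintype β] [DecidableEq β] (e : α ≃ β) (σ : Perm α) :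
    (e.permCongr σ).cycleType = σ.cycleType := by
  have h : e.permCongr σ
      = σ.extendDomain (e.trans (Equiv.subtypeUnivEquiv fun _ : β => trivial).symm) := by
    ext x
    rw [extendDomain_apply_subtype _ _ (trivial : (fun _ : β => True) x)]
    simp [Equiv.subtypeUnivEquiv]
  rw [h, cycleType_extendDomain]

lemma cycleOf_cycleOf (σ : Perm α) (z : α) : (σ.cycleOf z).cycleOf z = σ.cycleOf z := by
  by_cases hz : σ z = z
  · rw [(cycleOf_eq_one_iff σ).mpr hz, cycleOf_one]
  · exact (isCycle_cycleOf σ hz).cycleOf_eq (by rwa [cycleOf_apply_self])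

variable {z : α} {c σ : Perm α}

lemma eq_one_or_isCycle_of_cycleOf_eq_self (hc : c.cycleOf z = c) :
    c = 1 ∨ c.IsCycle ∧ z ∈ c.support := by
  by_cases hz : c z = z
  · exact .inl (hc ▸ (cycleOf_eq_one_iff c).mpr hz)
  · exact .inr ⟨hc ▸ isCycle_cycleOf c hz, mem_support.mpr hz⟩

lemma cycleType_of_cycleOf_eq_self (hc : c.cycleOf z = c) :
    c.cycleType = if c = 1 then 0 else {#(insert z c.support)} := by
  rcases eq_one_or_isCycle_of_cycleOf_eq_self hc with rfl | ⟨hcyc, hz⟩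
  · simp
  · rw [if_neg hcyc.ne_one, insert_eq_of_mem hz, hcyc.cycleType]

lemma odd_of_mem_cycleType_iff_of_cycleOf_eq_self (hc : c.cycleOf z = c) :
    (∀ l ∈ c.cycleType, Odd l) ↔ Odd #(insert z c.support) := by
  rw [cycleType_of_cycleOf_eq_self hc]
  split_ifs with h1
  · simp [h1]
  · simp

lemma card_cycleType_add_card_insert_support (hc : c.cycleOf z = c) :
    Multiset.card c.cycleType + #(insert z c.support) = c.cycleType.sum + 1 := by
  rw [cycleType_of_cycleOf_eq_self hc]
  split_ifs with h1
  · simp [h1]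
  · simp [add_comm]

lemma disjoint_ofSubtype (δ : Perm {x // x ∉ insert z c.support}) : Disjoint c (ofSubtype δ) := by
  intro x
  by_cases hx : x ∈ insert z c.support
  · exact .inr (ofSubtype_apply_of_not_mem δ (not_not.mpr hx))
  · exact .inl (notMem_support.mp fun h => hx (mem_insert_of_mem h))

lemma cycleOf_mul_ofSubtype (hc : c.cycleOf z = c) (δ : Perm {x // x ∉ insert z c.support}) :
    (c * ofSubtype δ).cycleOf z = c := by
  rw [cycleOf_mul_of_apply_right_eq_self (disjoint_ofSubtype δ).commute z
    (ofSubtype_apply_of_not_mem δ (not_not.mpr (mem_insert_self z _))), hc]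

lemma exists_mul_ofSubtype_eq (hσ : σ.cycleOf z = c) :
    ∃ δ : Perm {x // x ∉ insert z c.support}, c * ofSubtype δ = σ := by
  have hfix : ∀ a, ¬ a ∉ insert z c.support → (c⁻¹ * σ) a = a := by
    intro a ha
    have hsame : σ.SameCycle z a := by
      rcases mem_insert.mp (not_not.mp ha) with rfl | ha
      · exact SameCycle.refl _ _
      · exact (mem_support_cycleOf_iff.mp (hσ ▸ ha)).1
    rw [mul_apply, inv_eq_iff_eq, ← hσ, hsame.cycleOf_apply]
  refine ⟨(Perm.subtypeEquivSubtypePerm _).symm ⟨c⁻¹ * σ, hfix⟩, ?_⟩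
  rw [← Perm.subtypeEquivSubtypePerm_apply_coe,
    (Perm.subtypeEquivSubtypePerm _).apply_symm_apply, mul_inv_cancel_left]

noncomputable def mulOfSubtypeEquiv (hc : c.cycleOf z = c) :
    Perm {x // x ∉ insert z c.support} ≃ {σ : Perm α // σ.cycleOf z = c} :=
  Equiv.ofBijective (fun δ => ⟨c * ofSubtype δ, cycleOf_mul_ofSubtype hc δ⟩)
    ⟨fun _ _ h => ofSubtype_injective (mul_left_cancel (congrArg Subtype.val h)),
      fun ⟨_, hσ⟩ => (exists_mul_ofSubtype_eq hσ).imp fun _ h => Subtype.ext h⟩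

lemma cycleType_mul_ofSubtype (δ : Perm {x // x ∉ insert z c.support}) :
    (c * ofSubtype δ).cycleType = c.cycleType + δ.cycleType := by
  rw [(disjoint_ofSubtype δ).cycleType_mul, cycleType_ofSubtype]

lemma card_compl_insert_support :
    Fintype.card {x // x ∉ insert z c.support} = Fintype.card α - #(insert z c.support) := by
  rw [Fintype.card_subtype_compl, Fintype.card_coe]

end CycleOf

section CyclesThrough

variable {α : Type*}

lemma nodup_cons_ofFn {z : α} {d : ℕ} (e : Fin d ↪ {x // x ≠ z}) :
    (z :: List.ofFn fun i => (e i : α)).Nodup := by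
  refine List.nodup_cons.mpr
    ⟨fun h => ?_, List.nodup_ofFn.mpr (Subtype.val_injective.comp e.injective)⟩
  obtain ⟨i, hi⟩ := List.mem_ofFn.mp h
  exact (e i).2 hi

variable [DecidableEq α] {z : α} {d : ℕ}

def cycleOfEmbedding (z : α) (e : Fin d ↪ {x // x ≠ z}) : Perm α :=
  List.formPerm (z :: List.ofFn fun i => (e i : α))

lemma cycleOfEmbedding_pow_apply (e : Fin d ↪ {x // x ≠ z}) (i : Fin d) :
    (cycleOfEmbedding z e ^ (i + 1 : ℕ)) z = e i := by
  have := List.formPerm_pow_apply_getElem _ (nodup_cons_ofFn e) (i + 1) 0 (by simp)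
  simpa [cycleOfEmbedding, Nat.mod_eq_of_lt (Nat.succ_lt_succ i.isLt)] using this

lemma cycleOfEmbedding_injective : Function.Injective (cycleOfEmbedding (d := d) z) :=
  fun e e' h => by
    ext i
    rw [← cycleOfEmbedding_pow_apply, h, cycleOfEmbedding_pow_apply]

variable [Fintype α]

/-- The cycles of length `d + 1` through `z`, where the identity counts as the cycle of length `1`
through `z`. -/
def cyclesThrough (z : α) (d : ℕ) : Finset (Perm α) :=
  {c | c.cycleOf z = c ∧ #(insert z c.support) = d + 1}

lemma cycleOfEmbedding_mem_cyclesThrough (e : Fin d ↪ {x // x ≠ z}) :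
    cycleOfEmbedding z e ∈ cyclesThrough z d := by
  rcases d with _ | d
  · simp [cycleOfEmbedding, cyclesThrough]
  · set l := z :: List.ofFn fun i => (e i : α)
    have hl : 2 ≤ l.length := by simp [l]
    have hsupp := List.support_formPerm_of_nodup l (nodup_cons_ofFn e)
      fun x h => by simpa [l] using congrArg List.length h
    have hz : z ∈ (List.formPerm l).support := hsupp ▸ List.mem_toFinset.mpr List.mem_cons_self
    refine mem_filter.mpr ⟨mem_univ _,
      (List.isCycle_formPerm (nodup_cons_ofFn e) hl).cycleOf_eq (mem_support.mp hz), ?_⟩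
    rw [cycleOfEmbedding, insert_eq_of_mem hz, hsupp,
      List.toFinset_card_of_nodup (nodup_cons_ofFn e)]
    simp

lemma exists_cycleOfEmbedding_eq {c : Perm α} (hc : c ∈ cyclesThrough z d) :
    ∃ e : Fin d ↪ {x // x ≠ z}, cycleOfEmbedding z e = c := by
  obtain ⟨hcz, hL⟩ := (mem_filter.mp hc).2
  by_cases hz : z ∈ c.support
  · have hlen : (toList c z).length = d + 1 := by
      rw [length_toList, hcz, ← insert_eq_of_mem hz, hL]
    have hnd := nodup_toList c z
    have hget (j : ℕ) (hj : j < d + 1) : (c ^ j) z = (toList c z)[j] :=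
      (getElem_toList c z j (by omega)).symm
    refine ⟨⟨fun i => ⟨(c ^ (i + 1 : ℕ)) z, fun h => ?_⟩, fun i j h => ?_⟩, ?_⟩
    · have := (hnd.getElem_inj_iff (i := i + 1) (j := 0)).mp
        (by rw [← hget _ (by omega), ← hget 0 (by omega), h, pow_zero, one_apply])
      omega
    · have := (hnd.getElem_inj_iff (i := i + 1) (j := j + 1)).mp
        (by rw [← hget _ (by omega), ← hget _ (by omega)]; exact congrArg Subtype.val h)
      exact Fin.ext (by omega)
    · have heq : (z :: List.ofFn fun i : Fin d => (c ^ (i + 1 : ℕ)) z) = toList c z :=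
        List.ext_getElem (by simp [hlen]) fun j h₁ h₂ => by
          cases j <;> simp [getElem_toList]
      show List.formPerm (z :: List.ofFn fun i : Fin d => (c ^ (i + 1 : ℕ)) z) = c
      rw [heq, formPerm_toList, hcz]
  · obtain rfl : c = 1 := hcz ▸ (cycleOf_eq_one_iff c).mpr (notMem_support.mp hz)
    obtain rfl : d = 0 := by simpa using hL
    exact ⟨Function.Embedding.ofIsEmpty, by simp [cycleOfEmbedding]⟩

lemma card_cyclesThrough (z : α) (d : ℕ) :
    #(cyclesThrough z d) = (Fintype.card α - 1).descFactorial d := by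
  have himage : cyclesThrough z d
      = univ.map ⟨cycleOfEmbedding (d := d) z, cycleOfEmbedding_injective⟩ := by
    ext c
    simp only [mem_map, mem_univ, true_and, Function.Embedding.coeFn_mk]
    exact ⟨exists_cycleOfEmbedding_eq, fun ⟨e, he⟩ => he ▸ cycleOfEmbedding_mem_cyclesThrough e⟩
  rw [himage, card_map, card_univ, Fintype.card_embedding_eq, Fintype.card_fin,
    Fintype.card_subtype_compl, Fintype.card_subtype_eq]

end CyclesThrough

end Equiv.Perm

section OddCycles

variable {α : Type*} [Fintype α] [DecidableEq α]

lemma cycleCount_le_card (σ : Perm α) : cycleCount σ ≤ Fintype.card α := by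
  have hcard : Multiset.card σ.cycleType ≤ σ.cycleType.sum := by
    simpa using Multiset.card_nsmul_le_sum (s := σ.cycleType) (a := 1)
      fun _ hl => (one_lt_of_mem_cycleType hl).le
  have := sum_cycleType_le σ
  unfold cycleCount
  omega

lemma cycleCount_permCongr {β : Type*} [Fintype β] [DecidableEq β] (e : α ≃ β) (σ : Perm α) :
    cycleCount (e.permCongr σ) = cycleCount σ := by
  rw [cycleCount, cycleCount, cycleType_permCongr, Fintype.card_congr e]

def IsOddOfGenus (σ : Perm α) (g : ℤ) : Prop :=
  (∀ l ∈ σ.cycleType, Odd l) ∧ (cycleCount σ : ℤ) = Fintype.card α - 2 * g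

lemma isOddOfGenus_permCongr_iff {β : Type*} [Fintype β] [DecidableEq β] (e : α ≃ β)
    (σ : Perm α) (g : ℤ) : IsOddOfGenus (e.permCongr σ) g ↔ IsOddOfGenus σ g := by
  rw [IsOddOfGenus, IsOddOfGenus, cycleType_permCongr, cycleCount_permCongr, Fintype.card_congr e]

lemma card_isOddOfGenus {m : ℕ} (hm : Fintype.card α = m) (g : ℤ) :
    Nat.card {σ : Perm α // IsOddOfGenus σ g} = oddCyclePermCount m g := by
  subst hm
  let e := Fintype.equivFin α
  refine Nat.card_congr (e.permCongr.subtypeEquiv fun σ => ?_)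
  rw [← isOddOfGenus_permCongr_iff e, IsOddOfGenus, Fintype.card_fin]

lemma oddCyclePermCount_of_neg (m : ℕ) {g : ℤ} (hg : g < 0) : oddCyclePermCount m g = 0 := by
  rw [oddCyclePermCount, Nat.card_eq_zero]
  refine .inl ⟨fun ⟨σ, _, hσ⟩ => ?_⟩
  have := cycleCount_le_card σ
  rw [Fintype.card_fin] at this
  omega

end OddCycles

section Fibers

variable {α : Type*} [Fintype α] [DecidableEq α] {z : α} {c : Perm α}

lemma cycleCount_mul_ofSubtype (hc : c.cycleOf z = c) (δ : Perm {x // x ∉ insert z c.support}) :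
    cycleCount (c * ofSubtype δ) = cycleCount δ + 1 := by
  have hc' := card_cycleType_add_card_insert_support hc
  have hsupp : c.cycleType.sum ≤ #(insert z c.support) :=
    sum_cycleType c ▸ card_le_card (subset_insert z c.support)
  have hδ := sum_cycleType_le δ
  have hβ := card_compl_insert_support (z := z) (c := c)
  have hL := card_le_univ (insert z c.support)
  unfold cycleCount
  rw [cycleType_mul_ofSubtype, Multiset.card_add, Multiset.sum_add]
  omega

lemma isOddOfGenus_mul_ofSubtype_iff {k : ℕ} (hc : c.cycleOf z = c)
    (hL : #(insert z c.support) = 2 * k + 1) (δ : Perm {x // x ∉ insert z c.support}) (g : ℤ) :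
    IsOddOfGenus (c * ofSubtype δ) g ↔ IsOddOfGenus δ (g - k) := by
  have hodd : ∀ l ∈ c.cycleType, Odd l :=
    (odd_of_mem_cycleType_iff_of_cycleOf_eq_self hc).mpr (hL ▸ odd_two_mul_add_one k)
  have hβ := card_compl_insert_support (z := z) (c := c)
  have hLα := card_le_univ (insert z c.support)
  simp only [IsOddOfGenus, cycleType_mul_ofSubtype, Multiset.mem_add, cycleCount_mul_ofSubtype hc]
  refine and_congr ⟨fun h l hl => h l (.inr hl), fun h l => Or.rec (hodd l) (h l)⟩ ?_
  push_cast
  omega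

lemma card_isOddOfGenus_cycleOf_eq {k : ℕ} (hc : c.cycleOf z = c)
    (hL : #(insert z c.support) = 2 * k + 1) (g : ℤ) :
    Nat.card {σ : Perm α // IsOddOfGenus σ g ∧ σ.cycleOf z = c}
      = oddCyclePermCount (Fintype.card α - (2 * k + 1)) (g - k) := by
  rw [← card_isOddOfGenus (hL ▸ card_compl_insert_support)]
  symm
  refine Nat.card_congr ?_
  calc {δ // IsOddOfGenus δ (g - k)}
      ≃ {δ // IsOddOfGenus (c * ofSubtype δ) g} :=
        subtypeEquivRight fun δ => (isOddOfGenus_mul_ofSubtype_iff hc hL δ g).symm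
    _ ≃ {σ : {σ : Perm α // σ.cycleOf z = c} // IsOddOfGenus σ.1 g} :=
        (mulOfSubtypeEquiv hc).subtypeEquiv fun _ => Iff.rfl
    _ ≃ {σ : Perm α // σ.cycleOf z = c ∧ IsOddOfGenus σ g} :=
        subtypeSubtypeEquivSubtypeInter (·.cycleOf z = c) (IsOddOfGenus · g)
    _ ≃ {σ : Perm α // IsOddOfGenus σ g ∧ σ.cycleOf z = c} := subtypeEquivRight fun _ => and_comm

lemma odd_card_insert_support_cycleOf {σ : Perm α} (hσ : ∀ l ∈ σ.cycleType, Odd l) (z : α) :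
    Odd #(insert z (σ.cycleOf z).support) := by
  obtain ⟨δ, hδ⟩ := exists_mul_ofSubtype_eq (rfl : σ.cycleOf z = σ.cycleOf z)
  rw [← odd_of_mem_cycleType_iff_of_cycleOf_eq_self (cycleOf_cycleOf σ z)]
  intro l hl
  exact hσ l (hδ ▸ cycleType_mul_ofSubtype δ ▸ Multiset.mem_add.mpr (.inl hl))

end Fibers

section Recurrence

variable {α : Type*} [Fintype α] [DecidableEq α]

lemma card_isOddOfGenus_cycleOf_eq_sum (z : α) (g : ℕ) (c : Perm α) :
    Nat.card {σ : Perm α // IsOddOfGenus σ g ∧ σ.cycleOf z = c}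
      = ∑ k ∈ range (g + 1), if c ∈ cyclesThrough z (2 * k)
          then oddCyclePermCount (Fintype.card α - (2 * k + 1)) (g - k) else 0 := by
  by_cases hc : c.cycleOf z = c ∧ Odd #(insert z c.support)
  · obtain ⟨hc, j, hj⟩ := hc
    have hmem (k : ℕ) : c ∈ cyclesThrough z (2 * k) ↔ j = k := by
      simp only [cyclesThrough, mem_filter, mem_univ, true_and, hc, hj]
      omega
    simp_rw [hmem, sum_ite_eq, mem_range]
    rw [card_isOddOfGenus_cycleOf_eq hc hj]
    split_ifs with hjg
    · rfl
    · exact oddCyclePermCount_of_neg _ (by omega)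
  · have : IsEmpty {σ : Perm α // IsOddOfGenus σ g ∧ σ.cycleOf z = c} :=
      ⟨fun ⟨σ, hσ, hσc⟩ =>
        hc ⟨hσc ▸ cycleOf_cycleOf σ z, hσc ▸ odd_card_insert_support_cycleOf hσ.1 z⟩⟩
    rw [Nat.card_of_isEmpty]
    refine (sum_eq_zero fun k _ => if_neg fun hk => hc ?_).symm
    obtain ⟨hkc, hkL⟩ := (mem_filter.mp hk).2
    exact ⟨hkc, hkL ▸ odd_two_mul_add_one k⟩

theorem card_isOddOfGenus_eq_sum (z : α) (g : ℕ) :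
    Nat.card {σ : Perm α // IsOddOfGenus σ g}
      = ∑ k ∈ range (g + 1), (Fintype.card α - 1).descFactorial (2 * k)
          * oddCyclePermCount (Fintype.card α - (2 * k + 1)) (g - k) := by
  calc Nat.card {σ : Perm α // IsOddOfGenus σ g}
      = ∑ c : Perm α, Nat.card {σ : Perm α // IsOddOfGenus σ g ∧ σ.cycleOf z = c} := by
        rw [← Nat.card_sigma]
        exact Nat.card_congr ((Equiv.sigmaFiberEquiv fun σ : {σ // IsOddOfGenus σ g} =>
          σ.1.cycleOf z).symm.trans (Equiv.sigmaCongrRight fun c =>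
            subtypeSubtypeEquivSubtypeInter (IsOddOfGenus · g) (·.cycleOf z = c)))
    _ = ∑ k ∈ range (g + 1), ∑ c : Perm α, if c ∈ cyclesThrough z (2 * k)
          then oddCyclePermCount (Fintype.card α - (2 * k + 1)) (g - k) else 0 := by
        simp_rw [card_isOddOfGenus_cycleOf_eq_sum z g]
        exact sum_comm
    _ = _ := by
        simp_rw [sum_ite_mem, univ_inter, sum_const, card_cyclesThrough, smul_eq_mul]

end Recurrence

/-- `O(n+1,g) = O(n,g) + ∑_{k=1}^g (n)_{2k} O(n-2k, g-k)`. -/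
theorem stmt2 (n g : ℕ) :
    oddCyclePermCount (n + 1) (g : ℤ) =
      oddCyclePermCount n (g : ℤ) +
        ∑ k ∈ Finset.Icc 1 g,
          n.descFactorial (2 * k) * oddCyclePermCount (n - 2 * k) ((g : ℤ) - (k : ℤ)) := by
  have hrec := card_isOddOfGenus_eq_sum (0 : Fin (n + 1)) g
  rw [card_isOddOfGenus (Fintype.card_fin _), Fintype.card_fin, range_eq_Ico,
    sum_eq_sum_Ico_succ_bot (by omega : 0 < g + 1), zero_add, Ico_add_one_right_eq_Icc] at hrec
  simpa using hrec
end

section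
/- Define A(n,g) = (2n)!/((n+1)!·n!·2^{2g}) · O(n+1,g), where O(m,g) is the number of permutations of [m] with exactly m-2g odd cycles. Then (n+1)·A(n,g) = 2(2n-1)·A(n-1,g) + (2n-1)(n-1)(2n-3)·A(n-2,g-1). -/
open Finset Polynomial

/-- `A(n,g) = (2n)!·O(n+1,g) / ((n+1)!·n!·2^(2g))` (Lehman–Walsh). -/
noncomputable def Amap (n : ℕ) (g : ℤ) : ℚ :=
  ((2 * n).factorial : ℚ) * (oddCyclePermCount (n + 1) g : ℚ) /
    (((n + 1).factorial : ℚ) * (n.factorial : ℚ) * (2 : ℚ) ^ (2 * g))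

/-!
Write a permutation of `Fin (k + 1)` as `swap 0 p * ê`, where `ê` extends a permutation `e` of
`Fin k` by fixing `0` (`Equiv.Perm.decomposeFin`). For `p = 0` this adds the fixed point `0`; for
`p = j.succ` it inserts `0` into the cycle through `j`, so the cycle partition changes from
`L ::ₘ s` to `(L + 1) ::ₘ s` where `L` is the minimal period of `j`. Since `Equiv.Perm.partition`
records fixed points as parts `1`, insertion into a fixed point obeys the same formula.

Count permutations of `Fin (m + 2)` with `T` cycles, all odd. Either `0` is fixed, or `0` was
inserted after some `j` whose cycle in `e` has even length while all others are odd. Conjugating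
moves `j` to `0`; removing `0` from that even cycle, in the same way, leaves a permutation of
`Fin m` with `T` odd cycles and `m` possible predecessors for `0`. Hence
`O(m+2, T) = O(m+1, T-1) + (m+1) m O(m, T)`, i.e.
`O(m+3, g) = O(m+2, g) + (m+2)(m+1) O(m+1, g-1)` in terms of the genus, and the Lehman–Walsh
formula turns this into the Harer–Zagier recurrence.
-/

open Equiv Equiv.Perm Function

theorem Function.Semiconj.minimalPeriod_eq {α β : Type*} {f : α → β} {ga : α → α} {gb : β → β}
    (h : Semiconj f ga gb) (hf : Injective f) (a : α) :
    minimalPeriod gb (f a) = minimalPeriod ga a := by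
  rw [minimalPeriod_eq_minimalPeriod_iff]
  intro n
  simp only [IsPeriodicPt, IsFixedPt, ← (h.iterate_right n).eq, hf.eq_iff]

namespace Equiv.Perm

theorem minimalPeriod_conj {α : Type*} (φ σ : Perm α) (a : α) :
    minimalPeriod (φ * σ * φ⁻¹) (φ a) = minimalPeriod σ a :=
  Semiconj.minimalPeriod_eq (fun b => by simp) φ.injective a

variable {α : Type*} [Fintype α] [DecidableEq α]

theorem minimalPeriod_eq_card_support_cycleOf {σ : Perm α} {a : α} (ha : σ a ≠ a) :
    minimalPeriod σ a = #(σ.cycleOf a).support := by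
  have hc := isCycle_cycleOf σ ha
  have hca : σ.cycleOf a a ≠ a := by rwa [cycleOf_apply_self]
  rw [← hc.orderOf]
  refine Nat.dvd_antisymm ?_ ?_
  · rw [← isPeriodicPt_iff_minimalPeriod_dvd, IsPeriodicPt, IsFixedPt, ← coe_pow,
      ← cycleOf_pow_apply_self, ← hc.pow_eq_one_iff' hca, pow_orderOf_eq_one]
  · rw [orderOf_dvd_iff_pow_eq_one, hc.pow_eq_one_iff' hca, cycleOf_pow_apply_self, coe_pow]
    exact iterate_minimalPeriod

theorem parts_partition' (σ : Perm α) :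
    σ.partition.parts =
      σ.cycleType + Multiset.replicate (Fintype.card α - σ.cycleType.sum) 1 := by
  rw [parts_partition, sum_cycleType]

theorem card_parts_partition (σ : Perm α) :
    Multiset.card σ.partition.parts = cycleCount σ := by
  simp [parts_partition', cycleCount]

theorem forall_odd_parts_partition_iff (σ : Perm α) :
    (∀ l ∈ σ.partition.parts, Odd l) ↔ ∀ l ∈ σ.cycleType, Odd l := by
  simp +contextual [parts_partition', or_imp, Multiset.mem_replicate]

theorem minimalPeriod_mem_parts_partition (σ : Perm α) (a : α) :
    minimalPeriod σ a ∈ σ.partition.parts := by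
  rw [parts_partition, Multiset.mem_add]
  by_cases ha : σ a = a
  · right
    rw [minimalPeriod_eq_one_iff_isFixedPt.2 ha, Multiset.mem_replicate]
    have : #σ.support < Fintype.card α := Finset.card_lt_univ_of_notMem (notMem_support.2 ha)
    exact ⟨by omega, rfl⟩
  · left
    rw [minimalPeriod_eq_card_support_cycleOf ha, cycleType_def]
    exact Multiset.mem_map_of_mem _ (cycleOf_mem_cycleFactorsFinset_iff.2 (mem_support.2 ha))

section InsertFixedPoint

variable {e : Perm α} {x p : α}

theorem cycleOf_apply_of_apply_eq_self (hx : e x = x) (p : α) : e.cycleOf p x = x := by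
  rw [cycleOf_apply]
  split_ifs <;> simp [hx]

theorem mul_inv_cycleOf_apply_of_apply_eq_self (hx : e x = x) (p : α) :
    (e * (e.cycleOf p)⁻¹) x = x := by
  rw [mul_apply, inv_eq_iff_eq.2 (cycleOf_apply_of_apply_eq_self hx p).symm, hx]

theorem mul_inv_cycleOf_apply_self (e : Perm α) (p : α) : (e * (e.cycleOf p)⁻¹) p = p := by
  have hcp : e.cycleOf p (e⁻¹ p) = p := by
    rw [SameCycle.cycleOf_apply (by simpa using SameCycle.refl e p)]
    simp
  rw [mul_apply, inv_eq_iff_eq.2 hcp.symm]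
  simp

theorem disjoint_mul_inv_cycleOf (e : Perm α) (p : α) :
    Disjoint (e * (e.cycleOf p)⁻¹) (e.cycleOf p) := by
  by_cases hp : e p = p
  · rw [(cycleOf_eq_one_iff e).2 hp]
    exact disjoint_one_right _
  · exact disjoint_mul_inv_of_mem_cycleFactorsFinset
      (cycleOf_mem_cycleFactorsFinset_iff.2 (mem_support.2 hp))

theorem disjoint_mul_inv_cycleOf_swap (hx : e x = x) (p : α) :
    Disjoint (e * (e.cycleOf p)⁻¹) (swap x p) := by
  intro y
  by_cases hy : y = x ∨ y = p
  · rcases hy with rfl | rfl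
    · exact Or.inl (mul_inv_cycleOf_apply_of_apply_eq_self hx p)
    · exact Or.inl (mul_inv_cycleOf_apply_self e y)
  · push Not at hy
    exact Or.inr (swap_apply_of_ne_of_ne hy.1 hy.2)

theorem swap_mul_eq_mul_inv_cycleOf_mul (hx : e x = x) (p : α) :
    swap x p * e = e * (e.cycleOf p)⁻¹ * (swap x p * e.cycleOf p) := by
  rw [← mul_assoc, (disjoint_mul_inv_cycleOf_swap hx p).commute.eq, mul_assoc,
    inv_mul_cancel_right]

theorem disjoint_mul_inv_cycleOf_swap_mul (hx : e x = x) (p : α) :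
    Disjoint (e * (e.cycleOf p)⁻¹) (swap x p * e.cycleOf p) :=
  (disjoint_mul_inv_cycleOf_swap hx p).mul_right (disjoint_mul_inv_cycleOf e p)

theorem cycleType_mul_inv_cycleOf (e : Perm α) (p : α) :
    (e * (e.cycleOf p)⁻¹).cycleType = e.cycleType.erase (minimalPeriod e p) := by
  by_cases hp : e p = p
  · rw [(cycleOf_eq_one_iff e).2 hp, inv_one, mul_one, minimalPeriod_eq_one_iff_isFixedPt.2 hp,
      Multiset.erase_of_notMem fun h => (one_lt_of_mem_cycleType h).false]
  · rw [cycleType_mul_inv_mem_cycleFactorsFinset_eq_sub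
      (cycleOf_mem_cycleFactorsFinset_iff.2 (mem_support.2 hp)), (isCycle_cycleOf e hp).cycleType,
      minimalPeriod_eq_card_support_cycleOf hp, Multiset.sub_singleton]

theorem isCycle_and_card_support_swap_mul_cycleOf (hx : e x = x) (hpx : p ≠ x) :
    IsCycle (swap x p * e.cycleOf p) ∧
      #(swap x p * e.cycleOf p).support = minimalPeriod e p + 1 := by
  by_cases hp : e p = p
  · rw [(cycleOf_eq_one_iff e).2 hp, mul_one, minimalPeriod_eq_one_iff_isFixedPt.2 hp]
    exact ⟨isCycle_swap hpx.symm, card_support_swap hpx.symm⟩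
  obtain ⟨t, ht⟩ : ∃ t, toList e p = p :: t := by
    have h2 := two_le_card_support_cycleOf_iff.2 hp
    obtain ⟨n, hn⟩ : ∃ n, #(e.cycleOf p).support = n + 1 :=
      ⟨_, (Nat.sub_add_cancel (by omega)).symm⟩
    exact ⟨_, by rw [toList, hn, List.iterate]⟩
  have hxt : x ∉ toList e p := fun h => hp ((mem_toList_iff.1 h).1.apply_eq_self_iff.2 hx)
  have hnodup : (x :: p :: t).Nodup := ht ▸ List.nodup_cons.2 ⟨hxt, nodup_toList e p⟩
  have hform : swap x p * e.cycleOf p = List.formPerm (x :: p :: t) := by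
    rw [List.formPerm_cons_cons, ← ht, formPerm_toList]
  refine ⟨hform ▸ List.isCycle_formPerm hnodup (by simp), ?_⟩
  rw [hform, List.support_formPerm_of_nodup _ hnodup (by simp), List.toFinset_card_of_nodup hnodup,
    List.length_cons, ← ht, length_toList, ← minimalPeriod_eq_card_support_cycleOf hp]

theorem cycleType_swap_mul (hx : e x = x) (hpx : p ≠ x) :
    (swap x p * e).cycleType =
      (minimalPeriod e p + 1) ::ₘ e.cycleType.erase (minimalPeriod e p) := by
  obtain ⟨hcyc, hcard⟩ := isCycle_and_card_support_swap_mul_cycleOf hx hpx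
  rw [swap_mul_eq_mul_inv_cycleOf_mul hx p, (disjoint_mul_inv_cycleOf_swap_mul hx p).cycleType_mul,
    cycleType_mul_inv_cycleOf, hcyc.cycleType, hcard, Multiset.add_comm, Multiset.singleton_add]

theorem minimalPeriod_swap_mul (hx : e x = x) (hpx : p ≠ x) :
    minimalPeriod (swap x p * e) x = minimalPeriod e p + 1 := by
  obtain ⟨hcyc, hcard⟩ := isCycle_and_card_support_swap_mul_cycleOf hx hpx
  have hσx : (swap x p * e) x ≠ x := by simpa [hx] using hpx
  have hcx : (swap x p * e.cycleOf p) x ≠ x := by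
    rwa [mul_apply, cycleOf_apply_of_apply_eq_self hx, swap_apply_left]
  rw [minimalPeriod_eq_card_support_cycleOf hσx, swap_mul_eq_mul_inv_cycleOf_mul hx p,
    (disjoint_mul_inv_cycleOf_swap_mul hx p).cycleOf_mul_distrib,
    (cycleOf_eq_one_iff _).2 (mul_inv_cycleOf_apply_of_apply_eq_self hx p), one_mul,
    hcyc.cycleOf_eq hcx, hcard]

theorem parts_partition_swap_mul (hx : e x = x) (hpx : p ≠ x) :
    1 ::ₘ (swap x p * e).partition.parts =
      (minimalPeriod e p + 1) ::ₘ e.partition.parts.erase (minimalPeriod e p) := by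
  have hmem := minimalPeriod_mem_parts_partition e p
  have hle := sum_cycleType_le (swap x p * e)
  rw [cycleType_swap_mul hx hpx, Multiset.sum_cons] at hle
  rw [parts_partition', parts_partition' e, cycleType_swap_mul hx hpx, Multiset.sum_cons]
  rw [parts_partition, Multiset.mem_add] at hmem
  generalize minimalPeriod e p = L at hle hmem ⊢
  by_cases hL : L ∈ e.cycleType
  · have hsum := Multiset.sum_erase hL
    obtain ⟨r, hr⟩ : ∃ r, Fintype.card α - e.cycleType.sum = r + 1 :=
      ⟨Fintype.card α - e.cycleType.sum - 1, by omega⟩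
    rw [Multiset.erase_add_left_pos _ hL, hr,
      show Fintype.card α - (L + 1 + (e.cycleType.erase L).sum) = r by omega,
      Multiset.replicate_succ, Multiset.add_cons, Multiset.cons_add, Multiset.cons_swap]
  · obtain rfl : L = 1 := Multiset.eq_of_mem_replicate (hmem.resolve_left hL)
    rw [Multiset.erase_of_notMem hL] at hle ⊢
    obtain ⟨r, hr⟩ : ∃ r, Fintype.card α - e.cycleType.sum = r + 2 :=
      ⟨Fintype.card α - e.cycleType.sum - 2, by omega⟩
    rw [hr, show Fintype.card α - (1 + 1 + e.cycleType.sum) = r by omega,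
      Multiset.replicate_succ, Multiset.replicate_succ, Multiset.add_cons, Multiset.add_cons,
      Multiset.erase_cons_head, Multiset.cons_add, Multiset.cons_swap]

end InsertFixedPoint

section DecomposeFin

variable {k : ℕ} (e : Perm (Fin k))

theorem decomposeFin_symm_zero_eq_extendDomain :
    decomposeFin.symm (0, e) = e.extendDomain (finSuccAboveEquiv 0) := by
  ext i
  refine Fin.cases ?_ (fun i => ?_) i
  · rw [decomposeFin_symm_apply_zero, extendDomain_apply_not_subtype _ _ (by simp)]
  · have hsucc : ((finSuccAboveEquiv (0 : Fin (k + 1)) i : Fin (k + 1))) = i.succ := by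
      simp [finSuccAboveEquiv_apply, Fin.zero_succAbove]
    rw [decomposeFin_symm_apply_succ, ← hsucc, extendDomain_apply_image]
    simp [finSuccAboveEquiv_apply, Fin.zero_succAbove]

theorem decomposeFin_symm_eq_swap_mul (p : Fin (k + 1)) :
    decomposeFin.symm (p, e) = swap 0 p * decomposeFin.symm (0, e) := by
  ext i
  refine Fin.cases ?_ (fun i => ?_) i <;> simp

theorem semiconj_succ_decomposeFin_symm_zero :
    Semiconj Fin.succ e (decomposeFin.symm (0, e)) := fun j => by simp

theorem parts_partition_decomposeFin_symm_zero :
    (decomposeFin.symm (0, e)).partition.parts = 1 ::ₘ e.partition.parts := by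
  have hle := sum_cycleType_le e
  rw [Fintype.card_fin] at hle
  rw [parts_partition', parts_partition', decomposeFin_symm_zero_eq_extendDomain,
    cycleType_extendDomain, Fintype.card_fin, Fintype.card_fin, Nat.succ_sub hle,
    Multiset.replicate_succ, Multiset.add_cons]

theorem parts_partition_decomposeFin_symm_succ (j : Fin k) :
    (decomposeFin.symm (j.succ, e)).partition.parts =
      (minimalPeriod e j + 1) ::ₘ e.partition.parts.erase (minimalPeriod e j) := by
  have h := parts_partition_swap_mul (e := decomposeFin.symm (0, e)) (by simp) (Fin.succ_ne_zero j)
  rwa [← decomposeFin_symm_eq_swap_mul, parts_partition_decomposeFin_symm_zero,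
    Semiconj.minimalPeriod_eq (semiconj_succ_decomposeFin_symm_zero e) (Fin.succ_injective _),
    Multiset.erase_cons_tail_of_mem (minimalPeriod_mem_parts_partition e j), Multiset.cons_swap,
    Multiset.cons_inj_right] at h

theorem minimalPeriod_decomposeFin_symm_succ_zero (j : Fin k) :
    minimalPeriod (decomposeFin.symm (j.succ, e)) 0 = minimalPeriod e j + 1 := by
  rw [decomposeFin_symm_eq_swap_mul, minimalPeriod_swap_mul (by simp) (Fin.succ_ne_zero j),
    Semiconj.minimalPeriod_eq (semiconj_succ_decomposeFin_symm_zero e) (Fin.succ_injective _)]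

theorem card_subtype_perm_fin_succ (P : Perm (Fin (k + 1)) → Prop) :
    Nat.card {σ // P σ} = Nat.card {e : Perm (Fin k) // P (decomposeFin.symm (0, e))} +
      ∑ j : Fin k, Nat.card {e : Perm (Fin k) // P (decomposeFin.symm (j.succ, e))} := by
  rw [← Nat.card_congr (decomposeFin.symm.subtypeEquivOfSubtype (p := P)),
    Nat.card_congr (subtypeProdEquivSigmaSubtype fun p e => P (decomposeFin.symm (p, e))),
    Nat.card_sigma, Fin.sum_univ_succ]

end DecomposeFin

end Equiv.Perm

def Multiset.IsOddOfCard (s : Multiset ℕ) (T : ℤ) : Prop :=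
  (∀ l ∈ s, Odd l) ∧ (Multiset.card s : ℤ) = T

theorem Multiset.isOddOfCard_cons {a : ℕ} {s : Multiset ℕ} {T : ℤ} :
    (a ::ₘ s).IsOddOfCard T ↔ Odd a ∧ s.IsOddOfCard (T - 1) := by
  simp [IsOddOfCard, and_assoc, eq_sub_iff_add_eq]

noncomputable def oddPermCount (m : ℕ) (T : ℤ) : ℕ :=
  Nat.card {σ : Perm (Fin m) // σ.partition.parts.IsOddOfCard T}

/-- The cycle through `j` has even length, all other cycles are odd, and there are `T` cycles:
exactly the permutations that inserting a new point after `j` turns into ones counted by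
`oddPermCount (m + 1) T`. -/
def IsMarkedOddPerm {m : ℕ} (T : ℤ) (σ : Perm (Fin m)) (j : Fin m) : Prop :=
  ((minimalPeriod σ j + 1) ::ₘ σ.partition.parts.erase (minimalPeriod σ j)).IsOddOfCard T

noncomputable def markedOddPermCount (k : ℕ) (T : ℤ) : ℕ :=
  Nat.card {σ : Perm (Fin (k + 1)) // IsMarkedOddPerm T σ 0}

theorem isMarkedOddPerm_conj {m : ℕ} {T : ℤ} (φ σ : Perm (Fin m)) (j : Fin m) :
    IsMarkedOddPerm T (φ * σ * φ⁻¹) (φ j) ↔ IsMarkedOddPerm T σ j := by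
  rw [IsMarkedOddPerm, IsMarkedOddPerm, minimalPeriod_conj,
    (partition_eq_of_isConj.1 (isConj_iff.2 ⟨φ, rfl⟩)).symm]

theorem card_isMarkedOddPerm {k : ℕ} {T : ℤ} (j : Fin (k + 1)) :
    Nat.card {σ : Perm (Fin (k + 1)) // IsMarkedOddPerm T σ j} = markedOddPermCount k T := by
  refine Nat.card_congr (subtypeEquiv (MulAut.conj (swap j 0)).toEquiv fun σ => ?_)
  rw [MulEquiv.toEquiv_eq_coe, MulEquiv.coe_toEquiv, MulAut.conj_apply,
    ← isMarkedOddPerm_conj _ _ j, swap_apply_left]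

theorem oddPermCount_add_two (k : ℕ) (T : ℤ) :
    oddPermCount (k + 2) T = oddPermCount (k + 1) (T - 1) + (k + 1) * markedOddPermCount k T := by
  rw [oddPermCount, card_subtype_perm_fin_succ]
  congr 1
  · refine Nat.card_congr (subtypeEquivRight fun e => ?_)
    rw [parts_partition_decomposeFin_symm_zero, Multiset.isOddOfCard_cons]
    exact and_iff_right odd_one
  · have hterm (j : Fin (k + 1)) :
        Nat.card {e // (decomposeFin.symm (j.succ, e)).partition.parts.IsOddOfCard T} =
          markedOddPermCount k T := by
      rw [← card_isMarkedOddPerm j]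
      exact Nat.card_congr (subtypeEquivRight fun e => by
        rw [IsMarkedOddPerm, parts_partition_decomposeFin_symm_succ])
    simp only [hterm, Finset.sum_const, Finset.card_univ, Fintype.card_fin, smul_eq_mul]

theorem markedOddPermCount_eq (k : ℕ) (T : ℤ) :
    markedOddPermCount k T = k * oddPermCount k T := by
  have hzero (ρ : Perm (Fin k)) : ¬IsMarkedOddPerm T (decomposeFin.symm (0, ρ)) 0 := by
    rw [IsMarkedOddPerm, minimalPeriod_eq_one_iff_isFixedPt.2 (by simp [IsFixedPt]),
      Multiset.isOddOfCard_cons]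
    exact fun h => Nat.not_even_iff_odd.2 h.1 even_two
  have hsucc (i : Fin k) (ρ : Perm (Fin k)) :
      IsMarkedOddPerm T (decomposeFin.symm (i.succ, ρ)) 0 ↔ ρ.partition.parts.IsOddOfCard T := by
    rw [IsMarkedOddPerm, minimalPeriod_decomposeFin_symm_succ_zero,
      parts_partition_decomposeFin_symm_succ, Multiset.erase_cons_head]
    set L := minimalPeriod ρ i
    calc _ ↔ Odd (L + 1 + 1) ∧ (ρ.partition.parts.erase L).IsOddOfCard (T - 1) :=
          Multiset.isOddOfCard_cons
      _ ↔ Odd L ∧ (ρ.partition.parts.erase L).IsOddOfCard (T - 1) := by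
          rw [Nat.odd_add_one, Nat.odd_add_one, not_not]
      _ ↔ (L ::ₘ ρ.partition.parts.erase L).IsOddOfCard T := Multiset.isOddOfCard_cons.symm
      _ ↔ _ := by rw [Multiset.cons_erase (minimalPeriod_mem_parts_partition ρ i)]
  rw [markedOddPermCount, card_subtype_perm_fin_succ,
    Nat.card_eq_zero.2 (Or.inl ⟨fun ρ => hzero ρ.1 ρ.2⟩), zero_add]
  simp only [fun i => Nat.card_congr (subtypeEquivRight (hsucc i)), Finset.sum_const,
    Finset.card_univ, Fintype.card_fin, smul_eq_mul, oddPermCount]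

theorem oddPermCount_add_three (k : ℕ) (T : ℤ) :
    oddPermCount (k + 3) T =
      oddPermCount (k + 2) (T - 1) + (k + 2) * (k + 1) * oddPermCount (k + 1) T := by
  rw [oddPermCount_add_two (k + 1), markedOddPermCount_eq]
  ring

theorem oddCyclePermCount_eq_oddPermCount (m : ℕ) (g : ℤ) :
    oddCyclePermCount m g = oddPermCount m (m - 2 * g) :=
  Nat.card_congr (subtypeEquivRight fun σ => by
    rw [Multiset.IsOddOfCard, forall_odd_parts_partition_iff, card_parts_partition])

theorem oddCyclePermCount_add_three (m : ℕ) (g : ℤ) :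
    oddCyclePermCount (m + 3) g =
      oddCyclePermCount (m + 2) g + (m + 2) * (m + 1) * oddCyclePermCount (m + 1) (g - 1) := by
  simp only [oddCyclePermCount_eq_oddPermCount]
  rw [show ((m + 2 : ℕ) : ℤ) - 2 * g = ((m + 3 : ℕ) : ℤ) - 2 * g - 1 by push_cast; ring,
    show ((m + 1 : ℕ) : ℤ) - 2 * (g - 1) = ((m + 3 : ℕ) : ℤ) - 2 * g by push_cast; ring]
  exact oddPermCount_add_three m _

/-- The Harer–Zagier recurrence
`(n+1)A(n,g) = 2(2n-1)A(n-1,g) + (2n-1)(n-1)(2n-3)A(n-2,g-1)`. -/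
theorem stmt4 (n : ℕ) (hn : 2 ≤ n) (g : ℤ) :
    ((n : ℚ) + 1) * Amap n g =
      2 * (2 * (n : ℚ) - 1) * Amap (n - 1) g +
        (2 * (n : ℚ) - 1) * ((n : ℚ) - 1) * (2 * (n : ℚ) - 3) * Amap (n - 2) (g - 1) := by
  obtain ⟨m, rfl⟩ : ∃ m, n = m + 2 := ⟨n - 2, by omega⟩
  have hrec : (oddCyclePermCount (m + 3) g : ℚ) = oddCyclePermCount (m + 2) g +
      (m + 2) * (m + 1) * oddCyclePermCount (m + 1) (g - 1) := by
    exact_mod_cast oddCyclePermCount_add_three m g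
  have hpow : (2 : ℚ) ^ (2 * (g - 1)) = 2 ^ (2 * g) / 4 := by
    rw [mul_sub, zpow_sub₀ two_ne_zero]
    norm_num
  simp only [Amap, Nat.add_sub_cancel, show m + 2 - 1 = m + 1 by omega, hpow,
    show 2 * (m + 2) = 2 * m + 1 + 1 + 1 + 1 by ring, show 2 * (m + 1) = 2 * m + 1 + 1 by ring,
    Nat.factorial_succ, hrec]
  push_cast
  field_simp
  ring
end

section
/- The polynomial A_n(x) := ((2n)!/(2^n n!(n+1)!)) · ∑_{k=0}^{n} C(n,k)·(x+n-k)_{n+1} satisfies A_n(-x) = (-1)^{n+1} A_n(x); in particular A_n is an odd polynomial when n is even and an even polynomial when n is odd. -/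
open Finset Polynomial

/-!
Substituting `-x` turns the falling factorial `(x + a)_{n+1}` into `(-1)^(n+1) (x + n - a)_{n+1}`:
the factors `-x + a - i` are, up to sign, the factors `x + (n - a) - (n - i)` read backwards.
With `a = n - k` and `C(n,k) = C(n,n-k)`, the summand for `k` goes to `(-1)^(n+1)` times the
summand for `n - k`, and reindexing the sum by `k ↦ n - k` gives the claim.
-/

variable {R : Type*} [CommRing R]

theorem prod_range_X_add_C_sub_comp_neg (m : ℕ) {a b : R} (hab : a + b = m) :
    (∏ i ∈ range (m + 1), (X + C (a - i))).comp (-X) =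
      (-1 : R) ^ (m + 1) • ∏ i ∈ range (m + 1), (X + C (b - i)) := by
  have hfactor : ∀ i ∈ range (m + 1),
      (X + C (a - i)).comp (-X) = C (-1) * (X + C (b - ((m - i : ℕ) : R))) := by
    intro i hi
    rw [Nat.cast_sub (Nat.lt_succ_iff.mp (mem_range.mp hi)), ← hab,
      show b - (a + b - i) = -(a - i) by ring, add_comp, X_comp, C_comp, C_neg, C_neg, map_one]
    ring
  rw [Polynomial.prod_comp, prod_congr rfl hfactor, prod_mul_distrib, prod_const, card_range,
    ← map_pow, ← smul_eq_C_mul]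
  exact congrArg _ (prod_range_reflect (fun i : ℕ => X + C (b - i)) (m + 1))

theorem sum_range_comp_neg_X_of_reflect (n : ℕ) (f : ℕ → R[X]) (s : R)
    (hf : ∀ k ≤ n, (f k).comp (-X) = s • f (n - k)) :
    (∑ k ∈ range (n + 1), f k).comp (-X) = s • ∑ k ∈ range (n + 1), f k := by
  rw [Polynomial.sum_comp, sum_congr rfl fun k hk => hf k (Nat.lt_succ_iff.mp (mem_range.mp hk)),
    ← smul_sum]
  exact congrArg _ (sum_range_reflect f (n + 1))

/-- The polynomial `A_n(x) = ((2n)!/(2^n n!(n+1)!))·∑_k C(n,k)(x+n-k)_{n+1}`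
satisfies `A_n(-x) = (-1)^(n+1)·A_n(x)`. -/
theorem stmt6 (n : ℕ) :
    letI P : Polynomial ℚ :=
      (((2 * n).factorial : ℚ) / (2 ^ n * (n.factorial : ℚ) * ((n + 1).factorial : ℚ))) •
        ∑ k ∈ Finset.range (n + 1), (n.choose k : ℚ) •
          ∏ i ∈ Finset.range (n + 1), (X + C ((n : ℚ) - (k : ℚ) - (i : ℚ)))
    P.comp (-X) = (-1 : ℚ) ^ (n + 1) • P := by
  rw [smul_comp, sum_range_comp_neg_X_of_reflect n _ _ fun k hk => ?_, smul_comm]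
  have hab : (n - k : ℚ) + (n - ((n - k : ℕ) : ℚ)) = n := by push_cast [hk]; ring
  rw [smul_comp, prod_range_X_add_C_sub_comp_neg n hab, Nat.choose_symm hk, smul_comm]
end

section
/- Let a_0,…,a_n be complex numbers with a_0 ≠ 0, a_n ≠ 0, satisfying a_1/a_0 = a_{n-1}/a_n and k·a_k + (n-k+2)·a_{k-2} = (a_1/a_0)·a_{k-1} for all 2 ≤ k ≤ n. Define F(x) = ∑_{k=0}^{n} a_k·(x+n-k)(x+n-k-1)⋯(x-k). Then (n+2+a_1/a_0)·F(x) = x·(F(x+1) - F(x-1)) as polynomials in x. -/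
/-!
With `D = descPochhammer ℂ (n + 1)` and `T j = D(x + n - j)` we have `F = ∑ a_k T k` and
`F(x ± 1) = ∑ a_k T (k ∓ 1)`. Comparing the two recursions `D_{N+1} = X D_N(X - 1)` and
`D_{N+1} = (X - N) D_N` at two consecutive shifts gives the three-term identity
`x (T (j - 1) - T (j + 1)) = (n + 2) T j + j T (j - 1) + (n - j) T (j + 1)`.
Summing it against `a_k` and collecting the coefficient of `T j`, the claim reduces to
`(j + 1) a_{j+1} + (n - j + 1) a_{j-1} = (a_1 / a_0) a_j` for `0 ≤ j ≤ n`, which is the recurrence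
for `1 ≤ j ≤ n - 1` and the two conditions on `a_1 / a_0` at `j = 0` and `j = n`.
-/

open Finset Polynomial

section DescPochhammer

variable {R : Type*} [CommRing R]

theorem prod_range_X_add_C_sub_eq_descPochhammer_comp (N : ℕ) (c : R) :
    ∏ i ∈ range N, (X + C (c - i)) = (descPochhammer R N).comp (X + C c) := by
  induction N with
  | zero => simp
  | succ N ih =>
    rw [prod_range_succ, ih, descPochhammer_succ_right, mul_comp, sub_comp, X_comp, natCast_comp,
      C_sub, ← C_eq_natCast]
    ring

theorem X_mul_descPochhammer_comp_X_sub_one (N : ℕ) :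
    X * (descPochhammer R N).comp (X - 1) = (X - (N : R[X])) * descPochhammer R N := by
  rw [← descPochhammer_succ_left, descPochhammer_succ_right, mul_comm]

theorem X_mul_descPochhammer_comp_sub (N : ℕ) (c : R) :
    X * ((descPochhammer R N).comp (X + C (c + 1)) - (descPochhammer R N).comp (X + C (c - 1))) =
      C ((N : R) + 1) * (descPochhammer R N).comp (X + C c)
        + C ((N : R) - 1 - c) * (descPochhammer R N).comp (X + C (c + 1))
        + C c * (descPochhammer R N).comp (X + C (c - 1)) := by
  have key (d : R) : (X + C d) * (descPochhammer R N).comp (X + C (d - 1)) =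
      (X + C (d - N)) * (descPochhammer R N).comp (X + C d) := by
    have h := congrArg (·.comp (X + C d)) (X_mul_descPochhammer_comp_X_sub_one (R := R) N)
    simp only [mul_comp, sub_comp, X_comp, natCast_comp, comp_assoc, one_comp] at h
    rw [C_sub, C_sub, C_1, ← add_sub_assoc, ← add_sub_assoc, h, map_natCast]
  have h1 := key c
  have h2 := key (c + 1)
  rw [add_sub_cancel_right] at h2
  simp only [map_add, map_sub, map_one, map_natCast] at h1 h2 ⊢
  linear_combination -h1 - h2

end DescPochhammer

/-- `descPochhammerShift R n j` is `(x + n - j)_{n+1} = E^j (x + n)_{n+1}`. -/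
noncomputable def descPochhammerShift (R : Type*) [CommRing R] (n : ℕ) (j : ℤ) : R[X] :=
  (descPochhammer R (n + 1)).comp (X + C ((n : R) - j))

section DescPochhammerShift

variable {R : Type*} [CommRing R]

theorem descPochhammerShift_comp_X_add_C (n : ℕ) (j d : ℤ) :
    (descPochhammerShift R n j).comp (X + C (d : R)) = descPochhammerShift R n (j - d) := by
  rw [descPochhammerShift, descPochhammerShift, comp_assoc, add_comp, X_comp, C_comp, add_assoc,
    ← C_add]
  congr 3
  push_cast
  ring

theorem descPochhammerShift_comp_X_add_one (n : ℕ) (j : ℤ) :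
    (descPochhammerShift R n j).comp (X + 1) = descPochhammerShift R n (j - 1) := by
  simpa using descPochhammerShift_comp_X_add_C (R := R) n j 1

theorem descPochhammerShift_comp_X_sub_one (n : ℕ) (j : ℤ) :
    (descPochhammerShift R n j).comp (X - 1) = descPochhammerShift R n (j + 1) := by
  simpa [← sub_eq_add_neg] using descPochhammerShift_comp_X_add_C (R := R) n j (-1)

theorem X_mul_descPochhammerShift_sub (n : ℕ) (j : ℤ) :
    X * (descPochhammerShift R n (j - 1) - descPochhammerShift R n (j + 1)) =
      C ((n : R) + 2) * descPochhammerShift R n j + C (j : R) * descPochhammerShift R n (j - 1)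
        + C ((n : R) - j) * descPochhammerShift R n (j + 1) := by
  have h := X_mul_descPochhammer_comp_sub (R := R) (n + 1) ((n : R) - j)
  rw [show (n : R) - j + 1 = n - ((j - 1 : ℤ) : R) by push_cast; ring,
    show (n : R) - j - 1 = n - ((j + 1 : ℤ) : R) by push_cast; ring,
    show ((n + 1 : ℕ) : R) - 1 - (n - j) = j by push_cast; ring,
    show ((n + 1 : ℕ) : R) + 1 = n + 2 by push_cast; ring] at h
  exact h

end DescPochhammerShift

theorem sum_smul_shift_eq_of_recurrence {R M : Type*} [CommRing R] [AddCommGroup M] [Module R M]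
    (n : ℕ) (hn : 1 ≤ n) (a : ℕ → R) (r : R) (p : ℤ → M)
    (h0 : a 1 = r * a 0) (hlast : a (n - 1) = r * a n)
    (hrec : ∀ k, 2 ≤ k → k ≤ n → (k : R) * a k + ((n : R) - k + 2) * a (k - 2) = r * a (k - 1)) :
    ∑ k ∈ range (n + 1), ((k : R) * a k) • p (k - 1)
      + ∑ k ∈ range (n + 1), (((n : R) - k) * a k) • p (k + 1)
      = ∑ k ∈ range (n + 1), (r * a k) • p k := by
  obtain ⟨m, rfl⟩ := Nat.exists_eq_add_of_le' hn
  -- peel off `k ∈ {0, 1}`, `k ∈ {m, m + 1}` and `k ∈ {0, m + 1}` from the three sums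
  rw [sum_range_succ' _ (m + 1), sum_range_succ' _ m, sum_range_succ _ (m + 1), sum_range_succ _ m,
    sum_range_succ _ (m + 1), sum_range_succ' _ m]
  have hmid : ∑ j ∈ range m, (((j + 1 + 1 : ℕ) : R) * a (j + 1 + 1)) • p ((j + 1 + 1 : ℕ) - 1)
      + ∑ j ∈ range m, ((((m + 1 : ℕ) : R) - j) * a j) • p (j + 1)
      = ∑ j ∈ range m, (r * a (j + 1)) • p (j + 1 : ℕ) := by
    rw [← sum_add_distrib]
    refine sum_congr rfl fun j hj => ?_
    have h := hrec (j + 2) (by omega) (by have := mem_range.mp hj; omega)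
    rw [Nat.add_sub_cancel, show j + 2 - 1 = j + 1 by omega] at h
    push_cast at h ⊢
    rw [add_sub_cancel_right, ← add_smul, ← h]
    congr 1
    ring
  rw [Nat.add_sub_cancel] at hlast
  rw [← hmid]
  simp only [zero_add, Nat.cast_zero, Nat.cast_one, Nat.cast_add, zero_mul, zero_smul, sub_self,
    add_zero, one_mul, add_sub_cancel_left, h0, hlast]
  abel

/-- If `a_0,…,a_n ∈ ℂ` with `a_0 ≠ 0 ≠ a_n` satisfy `a_1/a_0 = a_{n-1}/a_n` and
`k·a_k + (n-k+2)·a_{k-2} = (a_1/a_0)·a_{k-1}` for `2 ≤ k ≤ n`, then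
`F(x) = ∑_k a_k (x+n-k)_{n+1}` satisfies
`(n+2+a_1/a_0)·F(x) = x·(F(x+1) - F(x-1))`. -/
theorem stmt8 (n : ℕ) (hn : 1 ≤ n) (a : ℕ → ℂ) (h0 : a 0 ≠ 0) (hne : a n ≠ 0)
    (hratio : a 1 / a 0 = a (n - 1) / a n)
    (hrec : ∀ k, 2 ≤ k → k ≤ n →
      (k : ℂ) * a k + ((n : ℂ) - (k : ℂ) + 2) * a (k - 2) = (a 1 / a 0) * a (k - 1)) :
    letI F : Polynomial ℂ :=
      ∑ k ∈ Finset.range (n + 1), a k •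
        ∏ i ∈ Finset.range (n + 1), (X + C ((n : ℂ) - (k : ℂ) - (i : ℂ)))
    C ((n : ℂ) + 2 + a 1 / a 0) * F = X * (F.comp (X + 1) - F.comp (X - 1)) := by
  set r := a 1 / a 0
  have hF : ∑ k ∈ range (n + 1), a k • ∏ i ∈ range (n + 1), (X + C ((n : ℂ) - k - i)) =
      ∑ k ∈ range (n + 1), a k • descPochhammerShift ℂ n k := by
    simp only [descPochhammerShift, prod_range_X_add_C_sub_eq_descPochhammer_comp, Int.cast_natCast]
  have hterm (k : ℕ) :
      X * (a k • descPochhammerShift ℂ n (k - 1) - a k • descPochhammerShift ℂ n (k + 1)) =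
        (((n : ℂ) + 2) * a k) • descPochhammerShift ℂ n k
          + ((k : ℂ) * a k) • descPochhammerShift ℂ n (k - 1)
          + (((n : ℂ) - k) * a k) • descPochhammerShift ℂ n (k + 1) := by
    rw [← smul_sub, mul_smul_comm, X_mul_descPochhammerShift_sub]
    simp only [← smul_eq_C_mul, smul_add, smul_smul, Int.cast_natCast, mul_comm (a k)]
  have hscale : C ((n : ℂ) + 2 + r) * ∑ k ∈ range (n + 1), a k • descPochhammerShift ℂ n k =
      ∑ k ∈ range (n + 1), (((n : ℂ) + 2) * a k) • descPochhammerShift ℂ n k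
        + ∑ k ∈ range (n + 1), (r * a k) • descPochhammerShift ℂ n k := by
    rw [mul_sum, ← sum_add_distrib]
    refine sum_congr rfl fun k _ => ?_
    rw [← add_smul, ← smul_eq_C_mul, smul_smul, add_mul]
  have hsum := sum_smul_shift_eq_of_recurrence n hn a r (descPochhammerShift ℂ n)
    (div_mul_cancel₀ _ h0).symm (by rw [hratio, div_mul_cancel₀ _ hne]) hrec
  rw [hF, Polynomial.sum_comp, Polynomial.sum_comp]
  simp only [smul_comp, descPochhammerShift_comp_X_add_one, descPochhammerShift_comp_X_sub_one]
  rw [← sum_sub_distrib, mul_sum _ _ X, sum_congr rfl fun k _ => hterm k, sum_add_distrib,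
    sum_add_distrib, hscale, ← hsum]
  abel
end

section
/- Let F(x) = ∑_{k≥0} b_k x^k be a polynomial satisfying c·F(x) = x·(F(x+1) - F(x-1)) for some constant c. Then for every k ≥ 0, (c/2 - k)·b_k = ∑_{j≥1} C(k+2j, 2j+1)·b_{k+2j}. -/
open Finset Polynomial

/-!
By Taylor's formula the `m`-th coefficient of `F(x+1) - F(x-1)` is `D⁽ᵐ⁾F(1) - D⁽ᵐ⁾F(-1)` for the
Hasse derivative `D⁽ᵐ⁾`, in which the even powers cancel and the odd ones double. Comparing the
coefficients of `x^k` in `c·F(x) = x·(F(x+1) - F(x-1))` thus gives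
`c·b_k = 2·∑_{j ≥ 0} C(k+2j, 2j+1)·b_{k+2j}`, whose `j = 0` term is `k·b_k`.
-/

section
variable {R : Type*} [CommRing R]

theorem sum_range_two_mul_mul_one_sub_neg_one_pow (f : ℕ → R) (n : ℕ) :
    ∑ i ∈ range (2 * n), f i * (1 - (-1) ^ i) = 2 * ∑ j ∈ range n, f (2 * j + 1) := by
  induction n with
  | zero => simp
  | succ n ih =>
    rw [mul_add_one, sum_range_succ, sum_range_succ, sum_range_succ, ih, pow_succ, pow_mul]
    simp only [neg_one_sq, one_pow]
    ring

theorem Polynomial.eval_one_sub_eval_neg_one (p : R[X]) {n : ℕ} (hn : p.natDegree < 2 * n) :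
    p.eval 1 - p.eval (-1) = 2 * ∑ j ∈ range n, p.coeff (2 * j + 1) := by
  rw [eval_eq_sum_range' hn, eval_eq_sum_range' hn, ← sum_range_two_mul_mul_one_sub_neg_one_pow,
    ← sum_sub_distrib]
  simp only [one_pow, mul_one, mul_sub]

theorem Polynomial.coeff_comp_X_add_one_sub_comp_X_sub_one (F : R[X]) (m : ℕ) :
    (F.comp (X + 1) - F.comp (X - 1)).coeff m =
      2 * ∑ j ∈ range (F.natDegree + 1),
        ((m + 1 + 2 * j).choose (2 * j + 1) : R) * F.coeff (m + 1 + 2 * j) := by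
  have hdeg : (hasseDeriv m F).natDegree < 2 * (F.natDegree + 1) :=
    (natDegree_hasseDeriv_le F m).trans_lt (by omega)
  have h₁ : F.comp (X + 1) = taylor 1 F := by rw [taylor_apply, map_one]
  have h₂ : F.comp (X - 1) = taylor (-1) F := by rw [taylor_apply, map_neg, map_one, sub_eq_add_neg]
  rw [coeff_sub, h₁, h₂, taylor_coeff, taylor_coeff, eval_one_sub_eval_neg_one _ hdeg]
  congr 1
  refine sum_congr rfl fun j _ => ?_
  rw [hasseDeriv_coeff, ← Nat.choose_symm_add]
  ring_nf

theorem Polynomial.coeff_X_mul_comp_X_add_one_sub_comp_X_sub_one (F : R[X]) (k : ℕ) :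
    (X * (F.comp (X + 1) - F.comp (X - 1))).coeff k =
      2 * ∑ j ∈ range (F.natDegree + 1),
        ((k + 2 * j).choose (2 * j + 1) : R) * F.coeff (k + 2 * j) := by
  cases k with
  | zero => simp
  | succ m => rw [coeff_X_mul, coeff_comp_X_add_one_sub_comp_X_sub_one]

theorem sum_range_choose_two_mul_add_one (b : ℕ → R) (k d : ℕ) :
    ∑ j ∈ range (d + 1), ((k + 2 * j).choose (2 * j + 1) : R) * b (k + 2 * j) =
      k * b k + ∑ j ∈ Icc 1 d, ((k + 2 * j).choose (2 * j + 1) : R) * b (k + 2 * j) := by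
  rw [sum_range_succ', ← Ico_add_one_right_eq_Icc, sum_Ico_eq_sum_range, add_comm]
  simp [add_comm 1]

end

/-- If a polynomial `F(x) = ∑ b_k x^k` satisfies `c·F(x) = x·(F(x+1) - F(x-1))`, then
`(c/2 - k)·b_k = ∑_{j ≥ 1} C(k+2j, 2j+1)·b_{k+2j}` for all `k`. -/
theorem stmt9 (F : Polynomial ℚ) (c : ℚ)
    (h : C c * F = X * (F.comp (X + 1) - F.comp (X - 1))) (k : ℕ) :
    (c / 2 - (k : ℚ)) * F.coeff k =
      ∑ j ∈ Finset.Icc 1 F.natDegree,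
        ((k + 2 * j).choose (2 * j + 1) : ℚ) * F.coeff (k + 2 * j) := by
  have hk := congrArg (coeff · k) h
  simp only [coeff_C_mul, coeff_X_mul_comp_X_add_one_sub_comp_X_sub_one,
    sum_range_choose_two_mul_add_one F.coeff] at hk
  linear_combination hk / 2
end

section
/- The polynomial F_n(x) = (1+E)^n (x+n)_{n+1}, where E is the backward shift operator f(x) ↦ f(x-1), satisfies (2n+2)·F_n(x) = x·(F_n(x+1) - F_n(x-1)). -/
/-!
Write `F_n = ∑ₖ C(n,k) (x+n-k)_{n+1}`. The two recursions
`(x+m)_{d+1} = (x+m) (x+m-1)_d = (x+m)_d (x+m-d)` give, for every `m`,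
`(2d+2) (x+m)_{d+1} - x ((x+m+1)_{d+1} - (x+m-1)_{d+1}) = (d+1) (m (x+m-1)_d - (d-m) (x+m)_d)`.
Taking `d = n`, `m = n - k`, weighting by `C(n,k)` and summing, the right-hand sides cancel
because `(n-k) C(n,k) = (k+1) C(n,k+1)`.
-/

open Finset Polynomial

/-- The backward shift operator `E : f(x) ↦ f(x-1)` on polynomials. -/
noncomputable def shiftE : Polynomial ℚ →ₗ[ℚ] Polynomial ℚ where
  toFun f := f.comp (X - 1)
  map_add' f g := add_comp
  map_smul' c f := by simp [smul_comp]

theorem sum_range_choose_mul_sub_smul_succ {R M : Type*} [Ring R] [AddCommGroup M]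
    [Module R M] (n : ℕ) (f : ℕ → M) :
    ∑ k ∈ range (n + 1), ((n.choose k : R) * (n - k)) • f (k + 1)
      = ∑ k ∈ range (n + 1), ((n.choose k : R) * k) • f k := by
  rw [sum_range_succ, sum_range_succ']
  refine congr_arg₂ (· + ·) (sum_congr rfl fun k hk => ?_) (by simp)
  have hk : k ≤ n := (mem_range.mp hk).le
  have h := congr_arg (Nat.cast (R := R)) (Nat.choose_succ_right_eq n k)
  push_cast [Nat.cast_sub hk] at h
  rw [Nat.cast_succ, h]

namespace Polynomial

variable {R : Type*} [CommRing R]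

theorem X_sub_C_eq_X_add_C_neg (a : R) : X - C a = X + C (-a) := by
  rw [C_neg, sub_eq_add_neg]

theorem comp_X_add_C_comp_X_add_C (p : R[X]) (a b : R) :
    (p.comp (X + C a)).comp (X + C b) = p.comp (X + C (a + b)) := by
  rw [comp_assoc, add_comp, X_comp, C_comp, C_add, add_assoc, add_comm (C b)]

theorem descPochhammer_comp_X_add_C (d : ℕ) (m : R) :
    (descPochhammer R d).comp (X + C m) = ∏ i ∈ range d, (X + C (m - i)) := by
  induction d with
  | zero => simp
  | succ d ih =>
    rw [descPochhammer_succ_right, mul_comp, ih, prod_range_succ, sub_comp, X_comp,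
      natCast_comp, C_sub, map_natCast, add_sub_assoc]

theorem descPochhammer_succ_comp_X_add_C_left (d : ℕ) (m : R) :
    (descPochhammer R (d + 1)).comp (X + C m)
      = (X + C m) * (descPochhammer R d).comp (X + C (m - 1)) := by
  rw [descPochhammer_succ_left, mul_comp, X_comp, comp_assoc, sub_comp, X_comp, one_comp,
    C_sub, map_one, add_sub_assoc]

theorem descPochhammer_succ_comp_X_add_C_right (d : ℕ) (m : R) :
    (descPochhammer R (d + 1)).comp (X + C m)
      = (descPochhammer R d).comp (X + C m) * (X + C (m - d)) := by
  rw [descPochhammer_comp_X_add_C, descPochhammer_comp_X_add_C, prod_range_succ]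

theorem descPochhammer_succ_comp_central_difference (d : ℕ) (m : R) :
    C (2 * (d : R) + 2) * (descPochhammer R (d + 1)).comp (X + C m)
      - X * ((descPochhammer R (d + 1)).comp (X + C (m + 1))
        - (descPochhammer R (d + 1)).comp (X + C (m - 1)))
      = C ((d : R) + 1) * (C m * (descPochhammer R d).comp (X + C (m - 1))
        - C ((d : R) - m) * (descPochhammer R d).comp (X + C m)) := by
  have left_m := descPochhammer_succ_comp_X_add_C_left d m
  have right_m := descPochhammer_succ_comp_X_add_C_right d m
  have left_succ := descPochhammer_succ_comp_X_add_C_left d (m + 1)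
  have right_pred := descPochhammer_succ_comp_X_add_C_right d (m - 1)
  rw [add_sub_cancel_right] at left_succ
  simp only [map_add, map_sub, map_mul, map_ofNat, map_one]
    at left_m right_m left_succ right_pred ⊢
  linear_combination (C (d : R) + 1 - X) * left_m + (C (d : R) + 1 + X) * right_m
    - X * left_succ + X * right_pred

variable (R) in
/-- `∑ₖ C(n,k) (x+c-k)_{n+1}`: the paper's `F_n` is the case `c = n`. -/
noncomputable def binomialFallingSum (n : ℕ) (c : R) : R[X] :=
  ∑ k ∈ range (n + 1), (n.choose k : R) • (descPochhammer R (n + 1)).comp (X + C (c - k))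

theorem binomialFallingSum_comp_X_add_C (n : ℕ) (c b : R) :
    (binomialFallingSum R n c).comp (X + C b) = binomialFallingSum R n (c + b) := by
  simp only [binomialFallingSum, sum_comp, smul_comp, comp_X_add_C_comp_X_add_C,
    sub_add_eq_add_sub]

theorem binomialFallingSum_central_difference (n : ℕ) :
    C (2 * (n : R) + 2) * binomialFallingSum R n n
      = X * (binomialFallingSum R n (n + 1) - binomialFallingSum R n (n - 1)) := by
  set H : ℕ → R[X] := fun k => (descPochhammer R n).comp (X + C ((n : R) - k)) with hH
  rw [← sub_eq_zero]
  calc _ = ∑ k ∈ range (n + 1), (n.choose k : R) • C ((n : R) + 1) *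
        (C ((n : R) - k) * H (k + 1) - C (k : R) * H k) := by
        simp only [binomialFallingSum, mul_sum, ← sum_sub_distrib]
        refine sum_congr rfl fun k _ => ?_
        have term := descPochhammer_succ_comp_central_difference (R := R) n ((n : R) - k)
        rw [sub_sub_cancel, sub_sub, ← Nat.cast_add_one] at term
        rw [show (n : R) + 1 - k = n - k + 1 by ring,
          show (n : R) - 1 - k = n - ↑(k + 1) by push_cast; ring]
        simp only [hH, smul_eq_C_mul]
        linear_combination C (n.choose k : R) * term
    _ = C ((n : R) + 1) * (∑ k ∈ range (n + 1), ((n.choose k : R) * (n - k)) • H (k + 1)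
        - ∑ k ∈ range (n + 1), ((n.choose k : R) * k) • H k) := by
        rw [← sum_sub_distrib, mul_sum]
        refine sum_congr rfl fun k _ => ?_
        simp only [smul_eq_C_mul, map_mul]
        ring
    _ = 0 := by rw [sum_range_choose_mul_sub_smul_succ, sub_self, mul_zero]

end Polynomial

theorem shiftE_apply (p : ℚ[X]) : shiftE p = p.comp (X - 1) := rfl

theorem shiftE_pow_comp_X_add_C (k : ℕ) (p : ℚ[X]) (a : ℚ) :
    (shiftE ^ k) (p.comp (X + C a)) = p.comp (X + C (a - k)) := by
  induction k generalizing a with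
  | zero => simp
  | succ k ih =>
    rw [pow_succ, Module.End.mul_apply, shiftE_apply, ← C_1, X_sub_C_eq_X_add_C_neg,
      comp_X_add_C_comp_X_add_C, ih]
    congr 3
    push_cast
    ring

theorem one_add_shiftE_pow_comp_X_add_C (n : ℕ) (p : ℚ[X]) (a : ℚ) :
    ((1 + shiftE) ^ n) (p.comp (X + C a))
      = ∑ k ∈ range (n + 1), (n.choose k : ℚ) • p.comp (X + C (a - k)) := by
  rw [add_comm, (Commute.one_right shiftE).add_pow]
  simp only [one_pow, mul_one, LinearMap.sum_apply, Module.End.mul_apply,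
    Module.End.natCast_apply, map_nsmul, Nat.cast_smul_eq_nsmul, shiftE_pow_comp_X_add_C]

/-- The polynomial `F_n(x) = (1+E)^n (x+n)_{n+1}` satisfies
`(2n+2)·F_n(x) = x·(F_n(x+1) - F_n(x-1))`. -/
theorem stmt10 (n : ℕ) :
    letI F : Polynomial ℚ :=
      ((1 + shiftE) ^ n) (∏ i ∈ Finset.range (n + 1), (X + C ((n : ℚ) - (i : ℚ))))
    C (2 * (n : ℚ) + 2) * F = X * (F.comp (X + 1) - F.comp (X - 1)) := by
  have hF : ((1 + shiftE) ^ n) (∏ i ∈ range (n + 1), (X + C ((n : ℚ) - (i : ℚ))))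
      = binomialFallingSum ℚ n n := by
    rw [← descPochhammer_comp_X_add_C, one_add_shiftE_pow_comp_X_add_C]
    rfl
  simp only [hF]
  rw [← C_1, X_sub_C_eq_X_add_C_neg, binomialFallingSum_comp_X_add_C,
    binomialFallingSum_comp_X_add_C, ← sub_eq_add_neg]
  exact binomialFallingSum_central_difference n
end

section
/- Let P(x) = (1-E²)^n (x+2n)_{2n+1} where E is the backward shift operator f(x) ↦ f(x-1) and (x+2n)_{2n+1} = (x+2n)(x+2n-1)⋯x. Then P is a polynomial of degree n+1 (even though each summand has degree 2n+1). -/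
/-!
`1 - E²` acts as `f ↦ f - f(x - 2)`, and in characteristic zero such a difference operator
lowers the degree by exactly one: the top coefficient cancels, while the coefficient of
`x^(d-1)` becomes `2·d·lc f ≠ 0`. Applying it `n` times to a product of `2n+1` monic linear
factors therefore leaves a polynomial of degree `n + 1`.
-/

open Finset Polynomial

namespace Polynomial

variable {R : Type*}

theorem coeff_taylor_of_natDegree_eq_succ [CommRing R] {f : R[X]} {d : ℕ}
    (hf : f.natDegree = d + 1) (r : R) :
    (taylor r f).coeff d = f.coeff d + (d + 1) * r * f.leadingCoeff := by
  have hdeg : (hasseDeriv d f).natDegree < 2 := by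
    have := natDegree_hasseDeriv_le f d
    omega
  rw [taylor_coeff, eval_eq_sum_range' hdeg, sum_range_succ, sum_range_one]
  simp only [hasseDeriv_coeff, zero_add, Nat.choose_self, Nat.cast_one, one_mul, pow_zero,
    mul_one, pow_one, add_comm 1 d, Nat.choose_succ_self_right, leadingCoeff, hf]
  push_cast
  ring

theorem natDegree_sub_taylor [CommRing R] [IsDomain R] [CharZero R] {r : R} (hr : r ≠ 0)
    (f : R[X]) : (f - taylor r f).natDegree = f.natDegree - 1 := by
  obtain ⟨c, rfl⟩ | ⟨d, hd⟩ : (∃ c, f = C c) ∨ ∃ d, f.natDegree = d + 1 := by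
    rcases hf : f.natDegree with _ | d
    · exact .inl ⟨_, eq_C_of_natDegree_eq_zero hf⟩
    · exact .inr ⟨d, rfl⟩
  · simp
  have hlc : f.leadingCoeff ≠ 0 := leadingCoeff_ne_zero.mpr (by rintro rfl; simp at hd)
  have hcoeff : (f - taylor r f).coeff d = -((d + 1) * r * f.leadingCoeff) := by
    rw [coeff_sub, coeff_taylor_of_natDegree_eq_succ hd]
    ring
  have hle : (f - taylor r f).natDegree ≤ d := by
    refine natDegree_le_pred (n := d + 1) ?_ ?_
    · exact (natDegree_sub_le _ _).trans (by rw [natDegree_taylor, hd, max_self])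
    · rw [coeff_sub, ← hd, coeff_taylor_natDegree, leadingCoeff, sub_self]
  rw [hd, Nat.add_sub_cancel]
  refine natDegree_eq_of_le_of_coeff_ne_zero hle ?_
  rw [hcoeff, neg_ne_zero]
  exact mul_ne_zero (mul_ne_zero (by exact_mod_cast d.succ_ne_zero) hr) hlc

theorem natDegree_iterate_of_natDegree_apply [Semiring R] {T : R[X] → R[X]}
    (hT : ∀ f, (T f).natDegree = f.natDegree - 1) (n : ℕ) (f : R[X]) :
    (T^[n] f).natDegree = f.natDegree - n := by
  induction n with
  | zero => rfl
  | succ n ih => rw [Function.iterate_succ_apply', hT, ih, Nat.sub_sub]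

theorem natDegree_finsetProd_X_add_C_eq_card [CommSemiring R] [Nontrivial R] {ι : Type*}
    (s : Finset ι) (a : ι → R) : (∏ i ∈ s, (X + C (a i))).natDegree = #s := by
  rw [natDegree_prod_of_monic _ _ fun i _ => monic_X_add_C (a i)]
  simp

end Polynomial

theorem shiftE_pow_apply (k : ℕ) (f : ℚ[X]) : (shiftE ^ k) f = taylor (-k : ℚ) f := by
  induction k with
  | zero => simp
  | succ k ih =>
    rw [pow_succ', Module.End.mul_apply, ih]
    simp only [shiftE, LinearMap.coe_mk, AddHom.coe_mk, taylor_apply, comp_assoc]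
    congr 1
    simp only [map_neg, map_natCast, add_comp, X_comp, neg_comp, natCast_comp, Nat.cast_add,
      Nat.cast_one, neg_add_rev, map_add, map_one]
    ring

/-- `P(x) = (1-E²)^n (x+2n)_{2n+1}` is a polynomial of degree `n+1`. -/
theorem stmt19 (n : ℕ) :
    ((((1 - (shiftE : Module.End ℚ (Polynomial ℚ)) ^ 2) ^ n : Module.End ℚ (Polynomial ℚ))
      (∏ i ∈ Finset.range (2 * n + 1), (X + C ((2 * (n : ℚ)) - (i : ℚ)))))).natDegree
    = n + 1 := by
  have hstep (f : ℚ[X]) :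
      ((1 - shiftE ^ 2 : Module.End ℚ ℚ[X]) f).natDegree = f.natDegree - 1 := by
    rw [LinearMap.sub_apply, Module.End.one_apply, shiftE_pow_apply, Nat.cast_ofNat]
    exact natDegree_sub_taylor (by norm_num) f
  rw [Module.End.pow_apply, natDegree_iterate_of_natDegree_apply hstep,
    natDegree_finsetProd_X_add_C_eq_card, card_range]
  omega
end
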